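/- Let n ≥ 4 be even and let a = (x₁,…,xₙ) ∈ ℝ^{2n}, xₖ = (cos θₖ, sin θₖ), θₖ = 2πk/n, be the regular n-gon configuration with all masses equal to 1. With l = n/2 and θ_{kl} = 2πkl/n = πk, set P_{n/2} = Σ_{j=1}^{n−1} (1 − cos θ_{j(n/2)} cos θⱼ)/(2 d_{nj}³) and Q_{n/2} = Σ_{j=1}^{n−1} (cos θⱼ − cos θ_{j(n/2)})/(2 d_{nj}³), where d_{nj} = 2 sin(πj/n). Let v(n/2) ∈ ℝ^{2n} have k-th planar component cos(πk)·(cos θₖ, sin θₖ). Then the vector w(n/2) with k-th planar component sin(πk)·(cos θₖ, sin θₖ) is zero, and D²U(a) v(n/2) = (P_{n/2} − 3Q_{n/2}) v(n/2) and D²U(a) 𝕁ₙ v(n/2) = (P_{n/2} + 3Q_{n/2}) 𝕁ₙ v(n/2). -/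

import Mathlib

/-!
Identify the plane with `ℂ`. Since `D²(‖·‖⁻¹)(y) z = 3 ⟪y, z⟫ y / ‖y‖⁵ - z / ‖y‖³ =: K(y, z)`, the
Hessian of `U` acts by `(D²U(a) v)_k = ∑ⱼ K(aₖ - aⱼ, vₖ - vⱼ)`. For the regular `n`-gon
`aⱼ = ζ^(j+1)` with `ζ = exp (2πi/n)`, and for even `n` the vectors `v(n/2)` and `𝕁ₙ v(n/2)` are
`c · (-ζ)^(j+1)` with `c = 1` and `c = i`. As `K` commutes with multiplication by unit complex
numbers, `aₖ` factors out of every term, which then only depends on `m = j - k`; pairing `m` with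
`-m` kills the tangential components, and the radial/tangential eigenvalues of each pair are the
summands of `P_{n/2} ∓ 3 Q_{n/2}`.
-/

open Real Matrix

noncomputable section

/-- The Newtonian `n`-body potential. -/
def pot {n : ℕ} (m : Fin n → ℝ) (q : (Fin n × Fin 2) → ℝ) : ℝ :=
  ∑ i : Fin n, ∑ j : Fin n, if i < j then
    m i * m j / Real.sqrt ((q (i,0) - q (j,0))^2 + (q (i,1) - q (j,1))^2)
  else 0

/-- Hessian matrix `D²f(a)`. -/
def phess {n : ℕ} (f : ((Fin n × Fin 2) → ℝ) → ℝ) (a : (Fin n × Fin 2) → ℝ) :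
    Matrix (Fin n × Fin 2) (Fin n × Fin 2) ℝ :=
  Matrix.of fun p q => fderiv ℝ (fun x => fderiv ℝ f x (Pi.single q 1)) a (Pi.single p 1)

def J2 : Matrix (Fin 2) (Fin 2) ℝ := !![0, -1; 1, 0]

/-- `𝕁ₙ = diag(J₂,…,J₂)`. -/
def Jmat (n : ℕ) : Matrix (Fin n × Fin 2) (Fin n × Fin 2) ℝ :=
  Matrix.of fun p q => if p.1 = q.1 then J2 p.2 q.2 else 0

/-- The regular `n`-gon configuration. -/
def ngon (n : ℕ) : (Fin n × Fin 2) → ℝ := fun p =>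
  if p.2 = 0 then Real.cos (2 * π * (p.1.val + 1) / n)
  else Real.sin (2 * π * (p.1.val + 1) / n)

/-- `v(l)`: `k`-th planar component `cos θ_{kl} · (cos θₖ, sin θₖ)`, `θ_{kl} = 2πkl/n`. -/
def vvec (n l : ℕ) : (Fin n × Fin 2) → ℝ := fun p =>
  Real.cos (2 * π * (p.1.val + 1) * l / n) *
    (if p.2 = 0 then Real.cos (2 * π * (p.1.val + 1) / n)
     else Real.sin (2 * π * (p.1.val + 1) / n))

/-- `w(l)`: `k`-th planar component `sin θ_{kl} · (cos θₖ, sin θₖ)`. -/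
def wvec (n l : ℕ) : (Fin n × Fin 2) → ℝ := fun p =>
  Real.sin (2 * π * (p.1.val + 1) * l / n) *
    (if p.2 = 0 then Real.cos (2 * π * (p.1.val + 1) / n)
     else Real.sin (2 * π * (p.1.val + 1) / n))

/-- `d_{nj} = 2 sin(πj/n)`. -/
def dnj (n j : ℕ) : ℝ := 2 * Real.sin (π * j / n)

/-- `P_l = ∑_{j=1}^{n-1} (1 - cos θ_{jl} cos θⱼ)/(2 d_{nj}³)`. -/
def Pl (n l : ℕ) : ℝ :=
  ∑ j ∈ Finset.Icc 1 (n-1),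
    (1 - Real.cos (2 * π * j * l / n) * Real.cos (2 * π * j / n)) / (2 * (dnj n j)^3)

/-- `S_l = ∑_{j=1}^{n-1} sin θ_{jl} sin θⱼ/(2 d_{nj}³)`. -/
def Sl (n l : ℕ) : ℝ :=
  ∑ j ∈ Finset.Icc 1 (n-1),
    Real.sin (2 * π * j * l / n) * Real.sin (2 * π * j / n) / (2 * (dnj n j)^3)

/-- `Q_l = ∑_{j=1}^{n-1} (cos θⱼ - cos θ_{jl})/(2 d_{nj}³)`. -/
def Ql (n l : ℕ) : ℝ :=
  ∑ j ∈ Finset.Icc 1 (n-1),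
    (Real.cos (2 * π * j / n) - Real.cos (2 * π * j * l / n)) / (2 * (dnj n j)^3)

open scoped RealInnerProductSpace

lemma sum_sum_lt_sub_eq_sum_of_antisymm {ι : Type*} [Fintype ι] [LinearOrder ι] (F : ι → ι → ℝ)
    (hF : ∀ i j, F j i = -F i j) (k : ι) :
    ∑ i, ∑ j, (if i < j then (if i = k then F i j else 0) - (if j = k then F i j else 0) else 0)
      = ∑ j, F k j := by
  have split : ∀ i j, (if i < j then (if i = k then F i j else 0) - (if j = k then F i j else 0)
      else 0) = (if i = k then (if k < j then F k j else 0) else 0)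
        + (if j = k then (if i < k then F k i else 0) else 0) := by
    intro i j
    by_cases hi : i = k <;> by_cases hj : j = k
    · subst hi hj; simp
    · subst hi; simp [hj]
    · subst hj; simp [hi, hF i j]
    · simp [hi, hj]
  simp only [split, Finset.sum_add_distrib]
  rw [Finset.sum_comm]
  simp only [Finset.sum_ite_eq', Finset.mem_univ, if_true, ← Finset.sum_add_distrib]
  refine Finset.sum_congr rfl fun j _ => ?_
  rcases lt_trichotomy k j with h | rfl | h
  · simp [h, not_lt_of_gt h]
  · simp only [lt_irrefl, if_false]; linarith [hF k k]
  · simp [h, not_lt_of_gt h]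

lemma Fin.sum_add_sub_eq_two_smul {n : ℕ} [NeZero n] {M : Type*} [AddCommMonoid M] (F : Fin n → M)
    (k : Fin n) : ∑ m, (F (k + m) + F (k - m)) = 2 • ∑ j, F j := by
  rw [Finset.sum_add_distrib, two_smul]
  congr 1
  exacts [Equiv.sum_comp (Equiv.addLeft k) F, Equiv.sum_comp (Equiv.subLeft k) F]

lemma pow_val_add_add_one {n : ℕ} {M : Type*} [CommMonoid M] {χ : M} (hχ : χ ^ n = 1)
    (j m : Fin n) :
    χ ^ ((j + m).val + 1) = χ ^ (j.val + 1) * χ ^ m.val := by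
  rw [Fin.val_add, pow_succ, ← pow_eq_pow_mod _ hχ, pow_add, pow_succ, mul_right_comm]

lemma pow_val_sub_add_one {n : ℕ} [NeZero n] {G : Type*} [CommGroupWithZero G] {χ : G}
    (hχ : χ ^ n = 1) (k m : Fin n) :
    χ ^ ((k - m).val + 1) = χ ^ (k.val + 1) * (χ ^ m.val)⁻¹ := by
  have hχ0 : χ ≠ 0 := by rintro rfl; simp [zero_pow (NeZero.ne n)] at hχ
  rw [eq_mul_inv_iff_mul_eq₀ (pow_ne_zero _ hχ0), ← pow_val_add_add_one hχ, sub_add_cancel]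

namespace NBody

section Kepler

variable {F : Type*} [NormedAddCommGroup F] [InnerProductSpace ℝ F]

-- `D²(‖·‖⁻¹)(y) z`, the Hessian of the Kepler potential at `y` applied to `z`.
def keplerHess (y z : F) : F := (3 * ⟪y, z⟫ / ‖y‖ ^ 5) • y - (‖y‖ ^ 3)⁻¹ • z

lemma hasFDerivAt_norm_rpow_of_ne_zero {y : F} (hy : y ≠ 0) (p : ℝ) :
    HasFDerivAt (fun y : F => ‖y‖ ^ p) ((p * ‖y‖ ^ (p - 2)) • innerSL ℝ y) y := by
  have hsq : ∀ (x : F) (q : ℝ), (‖x‖ ^ 2) ^ (q / 2) = ‖x‖ ^ q := fun x q => by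
    rw [← Real.rpow_natCast, ← Real.rpow_mul (norm_nonneg x)]; ring_nf
  have h := (hasStrictFDerivAt_norm_sq y).hasFDerivAt.rpow_const (p := p / 2)
    (Or.inl (by positivity))
  simp only [hsq, show p / 2 - 1 = (p - 2) / 2 by ring] at h
  exact h.congr_fderiv (by ext w; simp; ring)

lemma hasFDerivAt_norm_inv {y : F} (hy : y ≠ 0) :
    HasFDerivAt (fun y : F => ‖y‖⁻¹) (-(‖y‖ ^ 3)⁻¹ • innerSL ℝ y) y := by
  have h := hasFDerivAt_norm_rpow_of_ne_zero hy (-(1 : ℕ))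
  simp only [Real.rpow_neg_natCast, _root_.zpow_neg, zpow_natCast, pow_one,
    show -((1 : ℕ) : ℝ) - 2 = -(3 : ℕ) by norm_num] at h
  exact h.congr_fderiv (by simp)

lemma hasFDerivAt_neg_inner_div_norm_cube {y : F} (hy : y ≠ 0) (z : F) :
    HasFDerivAt (fun y : F => -(‖y‖ ^ 3)⁻¹ * ⟪y, z⟫) (innerSL ℝ (keplerHess y z)) y := by
  have h := ((hasFDerivAt_norm_rpow_of_ne_zero hy (-(3 : ℕ))).mul
    (innerSL ℝ z).hasFDerivAt).neg
  simp only [Real.rpow_neg_natCast, _root_.zpow_neg, zpow_natCast,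
    show -((3 : ℕ) : ℝ) - 2 = -(5 : ℕ) by norm_num] at h
  refine (h.congr_fderiv ?_).congr_of_eventuallyEq (.of_forall fun x => ?_)
  · ext w
    simp [keplerHess, real_inner_comm]
    ring
  · simp [real_inner_comm]

lemma keplerHess_neg_neg (y z : F) :
    keplerHess (-y) (-z) = -keplerHess y z := by
  simp only [keplerHess, inner_neg_neg, norm_neg, smul_neg, neg_sub_neg, neg_sub]

end Kepler

lemma keplerHess_mul_left {u : ℂ} (hu : ‖u‖ = 1) (y z : ℂ) :
    keplerHess (u * y) (u * z) = u * keplerHess y z := by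
  have hinner : ⟪u * y, u * z⟫ = ⟪y, z⟫ := by
    rw [Complex.inner, Complex.inner, map_mul,
      show u * z * (starRingEnd ℂ u * starRingEnd ℂ y)
        = (u * starRingEnd ℂ u) * (z * starRingEnd ℂ y) by ring,
      Complex.mul_conj, Complex.normSq_eq_norm_sq, hu]
    simp
  simp only [keplerHess, hinner, norm_mul, hu, one_mul, mul_sub, mul_smul_comm]

lemma keplerHess_complex (y z : ℂ) : keplerHess y z =
    ⟨3 * (y.re * z.re + y.im * z.im) / ‖y‖ ^ 5 * y.re - z.re / ‖y‖ ^ 3,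
     3 * (y.re * z.re + y.im * z.im) / ‖y‖ ^ 5 * y.im - z.im / ‖y‖ ^ 3⟩ := by
  apply Complex.ext <;>
  simp only [keplerHess, Complex.inner, Complex.sub_re, Complex.sub_im, Complex.smul_re,
    Complex.smul_im, Complex.mul_re, Complex.conj_re, Complex.conj_im,
    smul_eq_mul] <;> ring

-- For `ε = cos θ_{m l}` and `φ = θ_m` this is the `m`-th summand of `P_l + σ · 3 Q_l`.
def pairCoeff (ε φ σ : ℝ) : ℝ :=
  ((1 - ε * Real.cos φ) + σ * (3 * (Real.cos φ - ε))) / (2 * (2 * Real.sin (φ / 2)) ^ 3)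

open Complex in
lemma keplerHess_add_keplerHess_conj (φ ε : ℝ) (c : ℂ) (hφ : 0 ≤ Real.sin (φ / 2)) :
    keplerHess (1 - exp (I * φ)) (c * (1 - ε * exp (I * φ)))
      + keplerHess (1 - exp (I * ↑(-φ))) (c * (1 - ε * exp (I * ↑(-φ))))
      = 2 * ((pairCoeff ε φ (-1) * c.re : ℝ) + (pairCoeff ε φ 1 * c.im : ℝ) * I) := by
  have hnorm : ∀ ψ : ℝ, ‖1 - exp (I * ψ)‖ = 2 * |Real.sin (ψ / 2)| := fun ψ => by
    rw [norm_sub_rev, norm_exp_I_mul_ofReal_sub_one, norm_mul, Real.norm_eq_abs,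
      Real.norm_eq_abs, abs_two]
  have hexp : ∀ ψ : ℝ, exp (I * ψ) = ⟨Real.cos ψ, Real.sin ψ⟩ := fun ψ => by
    rw [mul_comm]; apply Complex.ext <;> simp [exp_ofReal_mul_I_re, exp_ofReal_mul_I_im]
  simp only [keplerHess_complex, pairCoeff]
  rw [hnorm, hnorm, neg_div, Real.sin_neg, abs_neg, abs_of_nonneg hφ, hexp, hexp, Real.cos_neg,
    Real.sin_neg]
  set d := Real.sin (φ / 2)
  have hd : (2 * d) ^ 2 = 2 - 2 * Real.cos φ := by
    have h1 := Real.cos_two_mul (φ / 2)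
    rw [show 2 * (φ / 2) = φ by ring] at h1
    linear_combination 4 * Real.sin_sq_add_cos_sq (φ / 2) + 2 * h1
  have hs := Real.sin_sq_add_cos_sq φ
  rcases hφ.eq_or_lt with h0 | hpos
  · apply Complex.ext <;> simp [← h0]
  apply Complex.ext <;>
  simp only [Complex.add_re, Complex.add_im, Complex.mul_re, Complex.mul_im, Complex.sub_re,
    Complex.sub_im, Complex.ofReal_re, Complex.ofReal_im, Complex.I_re, Complex.I_im,
    Complex.one_re, Complex.one_im, Complex.re_ofNat, Complex.im_ofNat] <;>
  field_simp
  · linear_combination 6 * c.re * ε * (1 - Real.cos φ) * hs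
      - 3 * c.re * (1 + ε) * (1 - Real.cos φ) * hd
  · linear_combination 6 * c.im * (1 - ε) * hs - 3 * c.im * (1 - ε) * (1 + Real.cos φ) * hd

section Configuration

variable {n : ℕ}

def body (x : Fin n × Fin 2 → ℝ) (j : Fin n) : ℂ := ⟨x (j, 0), x (j, 1)⟩

def relPos (i j : Fin n) : (Fin n × Fin 2 → ℝ) →L[ℝ] ℂ :=
  LinearMap.toContinuousLinearMap
    { toFun := fun x => body x i - body x j
      map_add' := fun x y => by apply Complex.ext <;> simp [body] <;> ring
      map_smul' := fun c x => by apply Complex.ext <;> simp [body] <;> ring }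

@[simp] lemma relPos_apply (i j : Fin n) (x : Fin n × Fin 2 → ℝ) :
    relPos i j x = body x i - body x j := rfl

lemma relPos_swap (i j : Fin n) (x : Fin n × Fin 2 → ℝ) : relPos j i x = -relPos i j x := by
  simp

lemma body_single (p : Fin n × Fin 2) (i : Fin n) :
    body (Pi.single p 1) i = if i = p.1 then Complex.orthonormalBasisOneI p.2 else 0 := by
  obtain ⟨k, α⟩ := p
  by_cases h : i = k
  · subst h; fin_cases α <;> apply Complex.ext <;> simp [body]
  · apply Complex.ext <;> simp [body, h]

def CollisionFree (x : Fin n × Fin 2 → ℝ) : Prop := ∀ i j : Fin n, i ≠ j → relPos i j x ≠ 0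

lemma CollisionFree.eventually {a : Fin n × Fin 2 → ℝ} (ha : CollisionFree a) :
    ∀ᶠ x in nhds a, CollisionFree x := by
  refine Filter.eventually_all.2 fun i => Filter.eventually_all.2 fun j => ?_
  by_cases hij : i = j
  · exact .of_forall fun _ h => absurd hij h
  · exact ((relPos i j).continuous.continuousAt.eventually_ne (ha i j hij)).mono fun _ h _ => h

lemma pot_one_eq :
    pot (fun _ : Fin n => (1 : ℝ)) = fun x => ∑ i, ∑ j, if i < j then ‖relPos i j x‖⁻¹ else 0 := by
  ext x
  simp [pot, body, Complex.norm_def, Complex.normSq_apply, sq]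

lemma hasFDerivAt_pot {x : Fin n × Fin 2 → ℝ} (hx : CollisionFree x) :
    HasFDerivAt (pot fun _ : Fin n => (1 : ℝ))
      (∑ i, ∑ j, if i < j then
        (-(‖relPos i j x‖ ^ 3)⁻¹ • innerSL ℝ (relPos i j x)).comp (relPos i j) else 0) x := by
  rw [pot_one_eq]
  refine HasFDerivAt.fun_sum fun i _ => HasFDerivAt.fun_sum fun j _ => ?_
  split_ifs with hij
  · exact (hasFDerivAt_norm_inv (hx i j hij.ne)).comp x (relPos i j).hasFDerivAt
  · exact hasFDerivAt_const _ _

lemma hasFDerivAt_fderiv_pot_apply {a : Fin n × Fin 2 → ℝ} (ha : CollisionFree a)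
    (v : Fin n × Fin 2 → ℝ) :
    HasFDerivAt (fun x => fderiv ℝ (pot fun _ : Fin n => (1 : ℝ)) x v)
      (∑ i, ∑ j, if i < j then
        (innerSL ℝ (keplerHess (relPos i j a) (relPos i j v))).comp (relPos i j) else 0) a := by
  have hG : HasFDerivAt (fun x => ∑ i, ∑ j, if i < j then
      -(‖relPos i j x‖ ^ 3)⁻¹ * ⟪relPos i j x, relPos i j v⟫ else 0)
      (∑ i, ∑ j, if i < j then
        (innerSL ℝ (keplerHess (relPos i j a) (relPos i j v))).comp (relPos i j) else 0) a :=
    HasFDerivAt.fun_sum fun i _ => HasFDerivAt.fun_sum fun j _ => by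
      split_ifs with hij
      · exact (hasFDerivAt_neg_inner_div_norm_cube (ha i j hij.ne) _).comp a
          (relPos i j).hasFDerivAt
      · exact hasFDerivAt_const _ _
  refine hG.congr_of_eventuallyEq (ha.eventually.mono fun x hx => ?_)
  simp only [(hasFDerivAt_pot hx).fderiv, _root_.sum_apply]
  refine Finset.sum_congr rfl fun i _ => Finset.sum_congr rfl fun j _ => ?_
  split_ifs
  · rw [ContinuousLinearMap.comp_apply, _root_.smul_apply, innerSL_apply_apply,
      smul_eq_mul]
  · rfl

lemma phess_mulVec_apply {f : (Fin n × Fin 2 → ℝ) → ℝ} {a : Fin n × Fin 2 → ℝ}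
    {H : (Fin n × Fin 2 → ℝ) → (Fin n × Fin 2 → ℝ) →L[ℝ] ℝ}
    (hH : ∀ v, HasFDerivAt (fun x => fderiv ℝ f x v) (H v) a) (v : Fin n × Fin 2 → ℝ)
    (p : Fin n × Fin 2) :
    (phess f a).mulVec v p = H v (Pi.single p 1) := by
  have hsum : HasFDerivAt (fun x => fderiv ℝ f x v) (∑ q, v q • H (Pi.single q 1)) a := by
    refine (HasFDerivAt.fun_sum fun q _ => (hH (Pi.single q 1)).const_smul (v q))
      |>.congr_of_eventuallyEq (.of_forall fun x => ?_)
    conv_lhs => rw [← Finset.univ_sum_single v]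
    refine (map_sum _ _ _).trans (Finset.sum_congr rfl fun q _ => ?_)
    rw [show Pi.single q (v q) = v q • Pi.single q (1 : ℝ) by
      rw [← Pi.single_smul', smul_eq_mul, mul_one], map_smul]
    rfl
  rw [(hH v).unique hsum]
  simp [Matrix.mulVec, dotProduct, phess, (hH _).fderiv, mul_comm]

lemma phess_pot_mulVec_apply {a : Fin n × Fin 2 → ℝ} (ha : CollisionFree a)
    (v : Fin n × Fin 2 → ℝ) (k : Fin n) (α : Fin 2) :
    (phess (pot fun _ : Fin n => (1 : ℝ)) a).mulVec v (k, α)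
      = Complex.orthonormalBasisOneI.repr (∑ j, keplerHess (relPos k j a) (relPos k j v)) α := by
  rw [phess_mulVec_apply (hasFDerivAt_fderiv_pot_apply ha), OrthonormalBasis.repr_apply_apply,
    inner_sum, ← sum_sum_lt_sub_eq_sum_of_antisymm
      (fun i j => ⟪Complex.orthonormalBasisOneI α, keplerHess (relPos i j a) (relPos i j v)⟫)
      (fun i j => by
        rw [relPos_swap i j a, relPos_swap i j v, keplerHess_neg_neg, inner_neg_right]) k]
  simp only [_root_.sum_apply]
  refine Finset.sum_congr rfl fun i _ => Finset.sum_congr rfl fun j _ => ?_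
  by_cases hij : i < j
  · simp only [if_pos hij, ContinuousLinearMap.comp_apply, innerSL_apply_apply, relPos_apply,
      body_single, inner_sub_right]
    split_ifs <;> simp [real_inner_comm]
  · simp [hij]

end Configuration

section RegularPolygon

variable {n : ℕ}

def unitRoot (n : ℕ) : ℂ := Complex.exp (2 * π * Complex.I / n)

lemma unitRoot_pow (k : ℕ) : unitRoot n ^ k = Complex.exp (Complex.I * ↑(2 * π * k / n)) := by
  rw [unitRoot, ← Complex.exp_nat_mul]; congr 1; push_cast; ring

lemma norm_unitRoot_pow (k : ℕ) : ‖unitRoot n ^ k‖ = 1 := by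
  rw [unitRoot_pow, mul_comm, Complex.norm_exp_ofReal_mul_I]

lemma neg_unitRoot_pow_eq_one (hn : n ≠ 0) (heven : Even n) : (-unitRoot n) ^ n = 1 := by
  rw [heven.neg_pow, unitRoot, (Complex.isPrimitiveRoot_exp n hn).pow_eq_one]

lemma body_ngon (j : Fin n) : body (ngon n) j = unitRoot n ^ (j.val + 1) := by
  rw [unitRoot_pow, mul_comm]
  apply Complex.ext
  · rw [Complex.exp_ofReal_mul_I_re]; simp [body, ngon]
  · rw [Complex.exp_ofReal_mul_I_im]; simp [body, ngon]

lemma body_vvec (l : ℕ) (j : Fin n) :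
    body (vvec n l) j = (Real.cos (2 * π * (j.val + 1) * l / n) : ℂ) * body (ngon n) j := by
  apply Complex.ext <;>
  simp only [body, vvec, ngon, Complex.mul_re, Complex.mul_im, Complex.ofReal_re,
    Complex.ofReal_im] <;> simp

lemma two_pi_mul_half_div (hn : n ≠ 0) (heven : Even n) (x : ℝ) :
    2 * π * x * ((n / 2 : ℕ) : ℝ) / n = x * π := by
  obtain ⟨t, rfl⟩ := heven
  have ht : (t : ℝ) ≠ 0 := Nat.cast_ne_zero.2 (by omega)
  rw [show (t + t) / 2 = t by omega]
  push_cast; field_simp; ring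

lemma cos_two_pi_mul_half (hn : n ≠ 0) (heven : Even n) (x : ℕ) :
    Real.cos (2 * π * x * ((n / 2 : ℕ) : ℝ) / n) = (-1) ^ x := by
  rw [two_pi_mul_half_div hn heven, Real.cos_nat_mul_pi]

lemma body_vvec_half (heven : Even n) (j : Fin n) :
    body (vvec n (n / 2)) j = (-unitRoot n) ^ (j.val + 1) := by
  have hn : n ≠ 0 := by rintro rfl; exact j.elim0
  have hcos := cos_two_pi_mul_half hn heven (j.val + 1)
  push_cast at hcos
  rw [body_vvec, hcos, neg_pow, body_ngon]
  push_cast; ring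

lemma wvec_half_eq_zero (heven : Even n) : wvec n (n / 2) = 0 := by
  ext ⟨j, β⟩
  have hn : n ≠ 0 := by rintro rfl; exact j.elim0
  have hsin := Real.sin_nat_mul_pi (j.val + 1)
  push_cast at hsin
  simp [wvec, two_pi_mul_half_div hn heven, hsin]

lemma body_Jmat_mulVec (u : Fin n × Fin 2 → ℝ) (j : Fin n) :
    body ((Jmat n).mulVec u) j = Complex.I * body u j := by
  apply Complex.ext <;>
  simp [body, Matrix.mulVec, dotProduct, Jmat, J2, Fintype.sum_prod_type, Fin.sum_univ_two]

lemma collisionFree_ngon : CollisionFree (ngon n) := by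
  intro i j hij
  have hn : n ≠ 0 := by rintro rfl; exact i.elim0
  have hζ := Complex.isPrimitiveRoot_exp n hn
  rw [relPos_apply, body_ngon, body_ngon, sub_ne_zero, pow_succ, pow_succ]
  intro h
  exact hij (Fin.ext (hζ.pow_inj i.isLt j.isLt (mul_right_cancel₀ (hζ.ne_zero hn) h)))

lemma sum_pairCoeff (hn : n ≠ 0) (heven : Even n) (σ : ℝ) :
    ∑ m : Fin n, pairCoeff ((-1) ^ m.val) (2 * π * m.val / n) σ
      = Pl n (n / 2) + σ * (3 * Ql n (n / 2)) := by
  rw [Fin.sum_univ_eq_sum_range (fun m => pairCoeff ((-1) ^ m) (2 * π * m / n) σ),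
    Finset.range_eq_Ico, Finset.sum_eq_sum_Ico_succ_bot (Nat.pos_of_ne_zero hn),
    show Finset.Ico (0 + 1) n = Finset.Icc 1 (n - 1) by ext; simp; omega]
  simp only [Pl, Ql, Finset.mul_sum, ← Finset.sum_add_distrib]
  -- the `m = 0` term is a division by `dnj n 0 = 0`
  rw [show pairCoeff ((-1) ^ 0) (2 * π * ((0 : ℕ) : ℝ) / n) σ = 0 by simp [pairCoeff], zero_add]
  refine Finset.sum_congr rfl fun m _ => ?_
  rw [pairCoeff, cos_two_pi_mul_half hn heven, dnj, show 2 * π * m / n / 2 = π * m / n by ring]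
  ring

lemma sin_half_angle_nonneg (m : Fin n) : 0 ≤ Real.sin (2 * π * m.val / n / 2) := by
  apply Real.sin_nonneg_of_nonneg_of_le_pi (by positivity)
  have hm : (m.val : ℝ) ≤ n := by exact_mod_cast m.isLt.le
  rw [show 2 * π * m.val / n / 2 = π * (m.val / n) by ring]
  exact mul_le_of_le_one_right pi_pos.le (div_le_one_of_le₀ hm (Nat.cast_nonneg n))

open Complex in
lemma keplerHess_ngon_add_add_sub (heven : Even n) {V : Fin n × Fin 2 → ℝ} {c : ℂ}
    (hV : ∀ j, body V j = c * (-unitRoot n) ^ (j.val + 1)) (k m : Fin n) :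
    keplerHess (relPos k (k + m) (ngon n)) (relPos k (k + m) V)
      + keplerHess (relPos k (k - m) (ngon n)) (relPos k (k - m) V)
      = unitRoot n ^ (k.val + 1) *
          (2 * ((pairCoeff ((-1) ^ m.val) (2 * π * m.val / n) (-1)
                  * (c * ((-1 : ℝ) ^ (k.val + 1) : ℝ)).re : ℝ)
            + (pairCoeff ((-1) ^ m.val) (2 * π * m.val / n) 1
                  * (c * ((-1 : ℝ) ^ (k.val + 1) : ℝ)).im : ℝ) * I)) := by
  have hn : n ≠ 0 := by rintro rfl; exact k.elim0
  have : NeZero n := ⟨hn⟩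
  simp only [relPos_apply, body_ngon, hV]
  set ζ := unitRoot n
  set φ := 2 * π * m.val / n
  have hζ : ζ ^ n = 1 := (Complex.isPrimitiveRoot_exp n hn).pow_eq_one
  have hζ' : (-ζ) ^ n = 1 := neg_unitRoot_pow_eq_one hn heven
  have hneg : ∀ t : ℕ, (-ζ) ^ t = ((-1 : ℝ) ^ t : ℝ) * ζ ^ t := fun t => by
    push_cast; exact neg_pow ζ t
  have hω : ζ ^ m.val = exp (I * φ) := unitRoot_pow _
  have hω' : (ζ ^ m.val)⁻¹ = exp (I * ↑(-φ)) := by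
    rw [hω, ← Complex.exp_neg]; push_cast; ring_nf
  have hε : ((-1 : ℝ) ^ m.val)⁻¹ = (-1) ^ m.val := by rw [← inv_pow, inv_neg_one]
  have hu : ‖ζ ^ (k.val + 1)‖ = 1 := norm_unitRoot_pow _
  have factor_pos : ∀ x : ℂ, ζ ^ (k.val + 1) - ζ ^ (k.val + 1) * x = ζ ^ (k.val + 1) * (1 - x) :=
    fun x => by ring
  have factor_vel : ∀ (x : ℂ) (E ε : ℝ),
      c * (E * ζ ^ (k.val + 1)) - c * (E * ζ ^ (k.val + 1) * (ε * x))
        = ζ ^ (k.val + 1) * (c * E * (1 - ε * x)) := fun x E ε => by ring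
  rw [pow_val_add_add_one hζ, pow_val_add_add_one hζ', pow_val_sub_add_one hζ,
    pow_val_sub_add_one hζ', hneg (k.val + 1),
    hneg m.val, mul_inv, ← Complex.ofReal_inv, hε, hω', hω, factor_pos, factor_vel, factor_pos,
    factor_vel, keplerHess_mul_left hu, keplerHess_mul_left hu, ← mul_add,
    keplerHess_add_keplerHess_conj _ _ _ (sin_half_angle_nonneg m)]

lemma sum_keplerHess_ngon (heven : Even n) {V : Fin n × Fin 2 → ℝ} {c : ℂ}
    (hV : ∀ j, body V j = c * (-unitRoot n) ^ (j.val + 1)) (k : Fin n) :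
    ∑ j, keplerHess (relPos k j (ngon n)) (relPos k j V)
      = unitRoot n ^ (k.val + 1) *
          (((Pl n (n / 2) - 3 * Ql n (n / 2)) * (c * ((-1 : ℝ) ^ (k.val + 1) : ℝ)).re : ℝ)
            + ((Pl n (n / 2) + 3 * Ql n (n / 2)) * (c * ((-1 : ℝ) ^ (k.val + 1) : ℝ)).im : ℝ)
              * Complex.I) := by
  have hn : n ≠ 0 := by rintro rfl; exact k.elim0
  have : NeZero n := ⟨hn⟩
  have h := Fin.sum_add_sub_eq_two_smul
    (fun j => keplerHess (relPos k j (ngon n)) (relPos k j V)) k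
  rw [Finset.sum_congr rfl fun m _ => keplerHess_ngon_add_add_sub heven hV k m] at h
  simp only [← Finset.mul_sum, Finset.sum_add_distrib, ← Finset.sum_mul,
    ← Complex.ofReal_sum] at h
  rw [sum_pairCoeff hn heven, sum_pairCoeff hn heven, nsmul_eq_mul] at h
  push_cast at h ⊢
  linear_combination (-1 / 2 : ℂ) * h

lemma repr_ofReal_mul_body (Λ : ℝ) (V : Fin n × Fin 2 → ℝ) (k : Fin n) (α : Fin 2) :
    Complex.orthonormalBasisOneI.repr ((Λ : ℂ) * body V k) α = Λ * V (k, α) := by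
  fin_cases α <;> simp [body]

lemma sum_keplerHess_ngon_vvec (heven : Even n) (k : Fin n) :
    ∑ j, keplerHess (relPos k j (ngon n)) (relPos k j (vvec n (n / 2)))
      = ((Pl n (n / 2) - 3 * Ql n (n / 2) : ℝ) : ℂ) * body (vvec n (n / 2)) k := by
  rw [sum_keplerHess_ngon heven (c := 1) (fun j => by rw [body_vvec_half heven, one_mul]) k,
    body_vvec_half heven, neg_pow]
  simp only [one_mul, Complex.ofReal_re, Complex.ofReal_im, mul_zero, Complex.ofReal_zero,
    zero_mul, add_zero]
  push_cast
  ring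

lemma sum_keplerHess_ngon_Jmat_vvec (heven : Even n) (k : Fin n) :
    ∑ j, keplerHess (relPos k j (ngon n)) (relPos k j ((Jmat n).mulVec (vvec n (n / 2))))
      = ((Pl n (n / 2) + 3 * Ql n (n / 2) : ℝ) : ℂ)
          * body ((Jmat n).mulVec (vvec n (n / 2))) k := by
  rw [sum_keplerHess_ngon heven (c := Complex.I)
      (fun j => by rw [body_Jmat_mulVec, body_vvec_half heven]) k,
    body_Jmat_mulVec, body_vvec_half heven, neg_pow]
  simp only [Complex.I_mul_re, Complex.I_mul_im, Complex.ofReal_re, Complex.ofReal_im, neg_zero,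
    mul_zero, Complex.ofReal_zero, zero_add]
  push_cast
  ring

end RegularPolygon

end NBody

theorem ngon_hessian_half_eigenvectors_general (n : ℕ) (heven : 2 ∣ n) :
    wvec n (n / 2) = 0 ∧
    (phess (pot (fun _ : Fin n => (1:ℝ))) (ngon n)).mulVec (vvec n (n / 2))
      = (Pl n (n / 2) - 3 * Ql n (n / 2)) • vvec n (n / 2) ∧
    (phess (pot (fun _ : Fin n => (1:ℝ))) (ngon n)).mulVec ((Jmat n).mulVec (vvec n (n / 2)))
      = (Pl n (n / 2) + 3 * Ql n (n / 2)) • (Jmat n).mulVec (vvec n (n / 2)) := by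
  have heven' : Even n := even_iff_two_dvd.2 heven
  refine ⟨NBody.wvec_half_eq_zero heven', ?_, ?_⟩
  · ext ⟨k, α⟩
    rw [NBody.phess_pot_mulVec_apply NBody.collisionFree_ngon,
      NBody.sum_keplerHess_ngon_vvec heven', NBody.repr_ofReal_mul_body]
    rfl
  · ext ⟨k, α⟩
    rw [NBody.phess_pot_mulVec_apply NBody.collisionFree_ngon,
      NBody.sum_keplerHess_ngon_Jmat_vvec heven', NBody.repr_ofReal_mul_body]
    rfl

/-- for even `n`, `w(n/2) = 0` and `v(n/2)`, `𝕁ₙ v(n/2)` are eigenvectors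
of `D²U(a)` with eigenvalues `P_{n/2} - 3Q_{n/2}` and `P_{n/2} + 3Q_{n/2}`. -/
theorem ngon_hessian_half_eigenvectors (n : ℕ) (hn : 4 ≤ n) (heven : 2 ∣ n) :
    wvec n (n / 2) = 0 ∧
    (phess (pot (fun _ : Fin n => (1:ℝ))) (ngon n)).mulVec (vvec n (n / 2))
      = (Pl n (n / 2) - 3 * Ql n (n / 2)) • vvec n (n / 2) ∧
    (phess (pot (fun _ : Fin n => (1:ℝ))) (ngon n)).mulVec ((Jmat n).mulVec (vvec n (n / 2)))
      = (Pl n (n / 2) + 3 * Ql n (n / 2)) • (Jmat n).mulVec (vvec n (n / 2)) :=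
  ngon_hessian_half_eigenvectors_general n heven
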